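/- Let P^R be a set of tgds, P^C a set of negative constraints, D an extensional database, and Q a Boolean conjunctive query. Then P^R ∪ P^C ∪ D ⊨ Q if and only if either (a) P^R ∪ D ⊨ Q, or (b) for some negative constraint η ∈ P^C, P^R ∪ D ⊨ Q_η, where Q_η is the Boolean conjunctive query obtained as the existential closure of the body of η. -/

import Mathlib

set_option autoImplicit false

/-! # Basic syntax of Datalog± -/

/-- Ground terms: constants, frozen nulls (treated as constants), and labelled nulls. -/
inductive GTerm where
  | const : ℕ → GTerm
  | fconst : ℕ → GTerm
  | null : ℕ → GTerm
deriving DecidableEq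

/-- Terms appearing in rules: variables and constants. -/
inductive Term where
  | var : ℕ → Term
  | const : ℕ → Term
deriving DecidableEq

/-- A (non-ground) atom: a predicate name with a list of terms. -/
structure Atom where
  pred : ℕ
  args : List Term
deriving DecidableEq

/-- A ground atom. -/
structure GAtom where
  pred : ℕ
  args : List GTerm
deriving DecidableEq

/-- A tuple-generating dependency (rule) with a single head atom; the head
variables not occurring in the body are the existentially quantified variables. -/
structure TGD where
  body : List Atom
  head : Atom
deriving DecidableEq

/-- An instance: a (possibly infinite) set of ground atoms. -/
abbrev Inst := Set GAtom

/-- A predicate position: predicate name together with an argument index. -/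
abbrev Pos := ℕ × ℕ

def GTerm.isConst : GTerm → Prop
  | .const _ => True
  | .fconst _ => True
  | .null _ => False

def applyTerm (θ : ℕ → GTerm) : Term → GTerm
  | .var v => θ v
  | .const c => .const c

def applyAtom (θ : ℕ → GTerm) (a : Atom) : GAtom :=
  ⟨a.pred, a.args.map (applyTerm θ)⟩

def varInAtom (x : ℕ) (a : Atom) : Prop := Term.var x ∈ a.args

def varInBody (σ : TGD) (x : ℕ) : Prop := ∃ a ∈ σ.body, varInAtom x a

def varInHead (σ : TGD) (x : ℕ) : Prop := varInAtom x σ.head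

/-- Existential variables of a rule: head variables not occurring in the body. -/
def isExistVar (σ : TGD) (z : ℕ) : Prop := varInHead σ z ∧ ¬ varInBody σ z

/-- The set of body positions at which variable `x` occurs in rule `σ`. -/
def bodyPos (σ : TGD) (x : ℕ) : Set Pos :=
  { p | ∃ a ∈ σ.body, a.pred = p.1 ∧ a.args[p.2]? = some (Term.var x) }

/-- The set of head positions at which variable `x` occurs in rule `σ`. -/
def headPos (σ : TGD) (x : ℕ) : Set Pos :=
  { p | σ.head.pred = p.1 ∧ σ.head.args[p.2]? = some (Term.var x) }

/-- The number of occurrences of variable `x` in the body of `σ`. -/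
def occCount (σ : TGD) (x : ℕ) : ℕ :=
  (σ.body.map (fun a => a.args.count (Term.var x))).sum

/-- The nulls occurring in an instance. -/
def nullsOf (I : Inst) : Set ℕ := { n | ∃ a ∈ I, GTerm.null n ∈ a.args }

/-- Satisfaction of a tgd by an instance (as a first-order implication). -/
def satTGD (I : Inst) (σ : TGD) : Prop :=
  ∀ θ : ℕ → GTerm, (∀ a ∈ σ.body, applyAtom θ a ∈ I) →
    ∃ θ' : ℕ → GTerm, (∀ v, varInBody σ v → θ' v = θ v) ∧ applyAtom θ' σ.head ∈ I

/-- An extensional database: a finite set of ground atoms over constants only. -/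
def IsEDB (D : Finset GAtom) : Prop :=
  ∀ a ∈ D, ∀ t ∈ a.args, ∃ c, t = GTerm.const c

/-! # The chase -/

/-- A chase step with rule `σ`, assignment `θ` for the body, and extension `θ'`
mapping the existential variables to pairwise distinct fresh nulls. -/
def ChaseStep (P : Set TGD) (σ : TGD) (θ θ' : ℕ → GTerm) (I J : Inst) : Prop :=
  σ ∈ P ∧
  (∀ a ∈ σ.body, applyAtom θ a ∈ I) ∧
  (∀ v, varInBody σ v → θ' v = θ v) ∧
  (∀ z, isExistVar σ z → ∃ n, θ' z = GTerm.null n ∧ n ∉ nullsOf I) ∧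
  (∀ z z', isExistVar σ z → isExistVar σ z' → θ' z = θ' z' → z = z') ∧
  applyAtom θ' σ.head ∉ I ∧
  J = insert (applyAtom θ' σ.head) I

/-- A (fair) chase sequence for the program `P` with extensional database `D`. -/
structure ChaseSeq (P : Set TGD) (D : Set GAtom) where
  seq : ℕ → Inst
  init : seq 0 = D
  step : ∀ n, seq (n + 1) = seq n ∨ ∃ σ θ θ', ChaseStep P σ θ θ' (seq n) (seq (n + 1))
  mono : ∀ n, seq n ⊆ seq (n + 1)
  fair : ∀ n σ θ, σ ∈ P → (∀ a ∈ σ.body, applyAtom θ a ∈ seq n) →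
    ∃ m θ'', (∀ v, varInBody σ v → θ'' v = θ v) ∧ applyAtom θ'' σ.head ∈ seq m

/-- The (possibly infinite) chase instance produced by a chase sequence. -/
def ChaseSeq.res {P : Set TGD} {D : Set GAtom} (c : ChaseSeq P D) : Inst := ⋃ n, c.seq n

/-- The values appearing in an instance at a given position. -/
def valuesAt (I : Inst) (p : Pos) : Set GTerm :=
  { t | ∃ a ∈ I, a.pred = p.1 ∧ a.args[p.2]? = some t }

/-- The values appearing in an instance at any of the given positions. -/
def valsIn (I : Inst) (Sel : Set Pos) : Set GTerm := ⋃ p ∈ Sel, valuesAt I p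

/-- The finite positions of a program: those in which only finitely many
distinct values appear during the chase. -/
def FinPos (P : Set TGD) (D : Set GAtom) : Set Pos :=
  { p | ∀ c : ChaseSeq P D, (valuesAt c.res p).Finite }

/-- The chase relation: `A <_{P,D} B` inside a chase sequence. -/
def chaseRel {P : Set TGD} {D : Set GAtom} (c : ChaseSeq P D) (A B : GAtom) : Prop :=
  ∃ n σ θ θ', ChaseStep P σ θ θ' (c.seq n) (c.seq (n + 1)) ∧
    (∃ a ∈ σ.body, applyAtom θ a = A) ∧ B = applyAtom θ' σ.head

/-- The derivation relation: transitive closure of the chase relation. -/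
def derives {P : Set TGD} {D : Set GAtom} (c : ChaseSeq P D) : GAtom → GAtom → Prop :=
  Relation.TransGen (chaseRel c)

/-! # Selection functions and the semantic classes sch(S) -/

/-- A selection function assigns to every program (rules plus EDB) a set of
positions that are finite positions of the program. -/
def IsSelFn (Sel : Set TGD → Finset GAtom → Set Pos) : Prop :=
  ∀ (P : Set TGD) (D : Finset GAtom), IsEDB D → Sel P D ⊆ FinPos P ↑D

/-- Computability surrogate for a selection function. -/
def SelFnComputable (Sel : Set TGD → Finset GAtom → Set Pos) : Prop :=
  ∃ f : Set TGD → Finset GAtom → Pos → Bool,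
    ∀ P D p, f P D p = true ↔ p ∈ Sel P D

/-- `S`-stickiness of the chase: membership in the semantic class sch(S). -/
def SchMem (Sel : Set TGD → Finset GAtom → Set Pos) (P : Set TGD) (D : Finset GAtom) : Prop :=
  ∀ c : ChaseSeq P ↑D, ∀ n σ θ θ',
    ChaseStep P σ θ θ' (c.seq n) (c.seq (n + 1)) →
    ∀ x, 2 ≤ occCount σ x → (∀ p ∈ bodyPos σ x, p ∉ Sel P D) →
      θ x ∈ (applyAtom θ' σ.head).args ∧
      ∀ B, derives c (applyAtom θ' σ.head) B → θ x ∈ B.args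

/-! # The marking procedure and the syntactic classes syn-sch(S) -/

/-- The marking procedure of sticky Datalog±, as an inductively defined set of
marked body variables of the rules of `P`. -/
inductive Marked (P : Set TGD) : TGD → ℕ → Prop where
  | prelim (σ : TGD) (x : ℕ) : σ ∈ P → varInBody σ x → ¬ varInHead σ x → Marked P σ x
  | prop (σ σ' : TGD) (x w : ℕ) (p : Pos) : σ ∈ P → σ' ∈ P → Marked P σ x →
      p ∈ bodyPos σ x → varInBody σ' w → p ∈ headPos σ' w → Marked P σ' w

/-- Membership in the syntactic class syn-sch(S) for the (syntactic) selection
function determined by `g`: every repeated body variable is non-marked or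
occurs in a position selected by `g`. -/
def SynSch (g : Set TGD → Set Pos) (P : Set TGD) : Prop :=
  ∀ σ ∈ P, ∀ x, 2 ≤ occCount σ x → Marked P σ x → ∃ p ∈ bodyPos σ x, p ∈ g P

/-! # Dependency graph, rank, existential dependency graph, ∃-rank -/

/-- Edge of the dependency graph DG(P). -/
def dgEdge (P : Set TGD) (p p' : Pos) : Prop :=
  ∃ σ ∈ P, ∃ x, varInHead σ x ∧ p ∈ bodyPos σ x ∧ p' ∈ headPos σ x

/-- Special edge of the dependency graph DG(P). -/
def dgSEdge (P : Set TGD) (p p'' : Pos) : Prop :=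
  ∃ σ ∈ P, ∃ x z, varInHead σ x ∧ p ∈ bodyPos σ x ∧ isExistVar σ z ∧ p'' ∈ headPos σ z

/-- `SpecialCount P p n`: there is a path of DG(P) ending at `p` with at least
`n` special edges. -/
inductive SpecialCount (P : Set TGD) : Pos → ℕ → Prop where
  | zero (p : Pos) : SpecialCount P p 0
  | edge (p q : Pos) (n : ℕ) : dgEdge P p q → SpecialCount P p n → SpecialCount P q n
  | sedge (p q : Pos) (n : ℕ) : dgSEdge P p q → SpecialCount P p n → SpecialCount P q (n + 1)

/-- The finite-rank positions of `P`. -/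
def rankF (P : Set TGD) : Set Pos := { p | ∃ k, ∀ n, SpecialCount P p n → n ≤ k }

/-- Target positions `T_z` of the existential variable `z` of rule `σ`. -/
inductive TargetPos (P : Set TGD) (σ : TGD) (z : ℕ) : Pos → Prop where
  | base (p : Pos) : p ∈ headPos σ z → TargetPos P σ z p
  | closure (σ' : TGD) (x : ℕ) (p : Pos) : σ' ∈ P → varInBody σ' x →
      (∀ q ∈ bodyPos σ' x, TargetPos P σ z q) → p ∈ headPos σ' x → TargetPos P σ z p

/-- Nodes of the existential dependency graph EDG(P). -/
def ENode (P : Set TGD) : Set (TGD × ℕ) := { v | v.1 ∈ P ∧ isExistVar v.1 v.2 }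

/-- Edges of EDG(P). -/
def eEdge (P : Set TGD) (u v : TGD × ℕ) : Prop :=
  u ∈ ENode P ∧ v ∈ ENode P ∧
    ∃ x, varInBody v.1 x ∧ ∀ q ∈ bodyPos v.1 x, TargetPos P u.1 u.2 q

/-- `EPathLen P v n`: there is a path of EDG(P) with `n` nodes ending at `v`. -/
inductive EPathLen (P : Set TGD) : TGD × ℕ → ℕ → Prop where
  | single (v : TGD × ℕ) : v ∈ ENode P → EPathLen P v 1
  | cons (u v : TGD × ℕ) (n : ℕ) : eEdge P u v → EPathLen P u n → EPathLen P v (n + 1)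

/-- The ∃-rank of position `p` is at least `n`. -/
def eRankGE (P : Set TGD) (p : Pos) (n : ℕ) : Prop :=
  ∃ v : TGD × ℕ, EPathLen P v n ∧ TargetPos P v.1 v.2 p

/-- The finite-existential positions of `P` (positions of finite ∃-rank). -/
def erankF (P : Set TGD) : Set Pos := { p | ∃ k, ∀ n, eRankGE P p n → n ≤ k }

/-- Weakly-sticky programs. -/
def WS (P : Set TGD) : Prop := SynSch (fun P => rankF P) P

/-- Jointly-weakly-sticky programs. -/
def JWS (P : Set TGD) : Prop := SynSch (fun P => erankF P) P

/-! # Conjunctive queries and certain answers -/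

/-- A conjunctive query: a body (list of atoms) and a list of free variables;
the body variables that are not free are existentially quantified. -/
structure CQuery where
  body : List Atom
  free : List ℕ

def cqHolds (q : List Atom) (θ : ℕ → GTerm) (I : Inst) : Prop :=
  ∀ a ∈ q, applyAtom θ a ∈ I

/-- A Boolean conjunctive query (the existential closure of a list of atoms)
is true in an instance. -/
def bcqTrue (q : List Atom) (I : Inst) : Prop := ∃ θ, cqHolds q θ I

/-- The answers to a conjunctive query over an instance. -/
def answers (Q : CQuery) (I : Inst) : Set (List GTerm) :=
  { t | ∃ θ, cqHolds Q.body θ I ∧ t = Q.free.map θ }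

/-- `I` is a model of the program `P ∪ D`. -/
def isModel (P : Set TGD) (D : Set GAtom) (I : Inst) : Prop :=
  D ⊆ I ∧ ∀ σ ∈ P, satTGD I σ

/-- Tuples of (non-null, non-frozen) constants. -/
def nullFreeTuple (t : List GTerm) : Prop := ∀ s ∈ t, ∃ c, s = GTerm.const c

/-- The certain answers to a conjunctive query over a program. -/
def certAns (P : Set TGD) (D : Set GAtom) (Q : CQuery) : Set (List GTerm) :=
  { t | nullFreeTuple t ∧ ∀ I, isModel P D I → t ∈ answers Q I }

def atomVars (a : Atom) : Finset ℕ :=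
  (a.args.filterMap (fun t => match t with | .var v => some v | _ => none)).toFinset

def cqBodyVars (Q : CQuery) : Finset ℕ := (Q.body.map atomVars).foldr (· ∪ ·) ∅

def cqAllVars (Q : CQuery) : Finset ℕ := cqBodyVars Q ∪ Q.free.toFinset

/-- The number `M_Q` of existentially quantified variables of a conjunctive query. -/
def Mq (Q : CQuery) : ℕ := (cqBodyVars Q \ Q.free.toFinset).card

/-! # Sizes and numeric parameters -/

def tgdPreds (σ : TGD) : Finset ℕ := insert σ.head.pred (σ.body.map Atom.pred).toFinset

def progPreds (P : Finset TGD) : Finset ℕ := P.biUnion tgdPreds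

def tgdMaxAr (σ : TGD) : ℕ :=
  max σ.head.args.length ((σ.body.map (fun a => a.args.length)).foldr max 0)

/-- Maximum arity of the predicates of `P`. -/
def progMaxAr (P : Finset TGD) : ℕ := P.sup tgdMaxAr

def tgdVars (σ : TGD) : Finset ℕ := atomVars σ.head ∪ (σ.body.map atomVars).foldr (· ∪ ·) ∅

/-- Maximum number of variables in a rule of `P`. -/
def progMaxVars (P : Finset TGD) : ℕ := P.sup (fun σ => (tgdVars σ).card)

def atomSize (a : Atom) : ℕ := 1 + a.args.length

def tgdSize (σ : TGD) : ℕ := 1 + atomSize σ.head + (σ.body.map atomSize).sum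

/-- The size of a (finite) set of rules. -/
def progSize (P : Finset TGD) : ℕ := ∑ σ ∈ P, tgdSize σ

def edbConsts (D : Finset GAtom) : Finset ℕ :=
  D.biUnion (fun a =>
    (a.args.filterMap (fun t => match t with | GTerm.const c => some c | _ => none)).toFinset)

/-- The number of constants of the extensional database `D`. -/
def numConst (D : Finset GAtom) : ℕ := (edbConsts D).card

/-- The size of the extensional database `D`. -/
def edbSize (D : Finset GAtom) : ℕ := ∑ a ∈ D, (1 + a.args.length)

/-- Surrogate for "the property `R` is decidable in polynomial time in `size`":
there are a Boolean decision function and a polynomially bounded running time. -/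
def DecidesInPolyTime {α : Type*} (size : α → ℕ) (R : α → Prop) : Prop :=
  ∃ (f : α → Bool) (time : α → ℕ) (c k : ℕ),
    (∀ a, f a = true ↔ R a) ∧ ∀ a, time a ≤ c * size a ^ k + c

/-! # Proof trees and proof-tree schemas -/

/-- Ground trees of atoms. -/
inductive GTree where
  | node : GAtom → List GTree → GTree

def GTree.root : GTree → GAtom
  | .node a _ => a

/-- Proof trees: leaves are extensional atoms, internal nodes are obtained from
their children by a rule enforcement. -/
inductive IsProofTree (P : Set TGD) (D : Set GAtom) : GTree → Prop where
  | leaf (a : GAtom) : a ∈ D → IsProofTree P D (.node a [])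
  | step (σ : TGD) (θ θ' : ℕ → GTerm) (ts : List GTree) :
      σ ∈ P →
      (∀ v, varInBody σ v → θ' v = θ v) →
      (∀ z, isExistVar σ z → ∃ n, θ' z = GTerm.null n) →
      ts.map GTree.root = σ.body.map (applyAtom θ) →
      (∀ t ∈ ts, IsProofTree P D t) →
      IsProofTree P D (.node (applyAtom θ' σ.head) ts)

/-- Non-ground trees of atoms. -/
inductive ATree where
  | node : Atom → List ATree → ATree

def ATree.root : ATree → Atom
  | .node a _ => a

/-- The atom sitting at a given tree position (a list of child indices). -/
inductive NodeAt : ATree → List ℕ → Atom → Prop where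
  | here (a : Atom) (ts : List ATree) : NodeAt (.node a ts) [] a
  | child (a : Atom) (ts : List ATree) (i : ℕ) (t : ATree) (p : List ℕ) (b : Atom) :
      ts[i]? = some t → NodeAt t p b → NodeAt (.node a ts) (i :: p) b

def substT (s : ℕ → Term) : Term → Term
  | .var v => s v
  | .const c => .const c

def substAtom (s : ℕ → Term) (a : Atom) : Atom := ⟨a.pred, a.args.map (substT s)⟩

/-- A schema-level rule application: the node atom and its children are images
of the head and the body of a rule of `P` under a (term) substitution. -/
def SchemaStep (P : Set TGD) (a : Atom) (children : List Atom) : Prop :=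
  ∃ σ ∈ P, ∃ s s' : ℕ → Term,
    (∀ v, varInBody σ v → s' v = s v) ∧
    children = σ.body.map (substAtom s) ∧ a = substAtom s' σ.head

/-- A schema tree over a set of rules. -/
inductive IsSchemaTree (P : Set TGD) : ATree → Prop where
  | leaf (a : Atom) : IsSchemaTree P (.node a [])
  | step (a : Atom) (ts : List ATree) : ts ≠ [] → SchemaStep P a (ts.map ATree.root) →
      (∀ t ∈ ts, IsSchemaTree P t) → IsSchemaTree P (.node a ts)

/-- Two tree positions lie on a same root-to-leaf path. -/
def OnSamePath (p q : List ℕ) : Prop := p <+: q ∨ q <+: p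

/-- A type (I) variable of a schema: one occurring in two atoms not on a same path. -/
def TypeIVar (T : ATree) (x : ℕ) : Prop :=
  ∃ p q a b, NodeAt T p a ∧ NodeAt T q b ∧ ¬ OnSamePath p q ∧ varInAtom x a ∧ varInAtom x b

def renameAtom (ρ : ℕ → ℕ) (a : Atom) : Atom :=
  ⟨a.pred, a.args.map (fun t => match t with | .var v => .var (ρ v) | .const c => .const c)⟩

/-- Succinctness of a proof-tree schema: no atom on a path can be transformed
into another atom on the same path by renaming variables of type (II)
(i.e. by a renaming that is the identity on type (I) variables). -/
def SuccinctSchema (T : ATree) : Prop :=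
  ∀ p q a b, NodeAt T p a → NodeAt T q b → p ≠ q → OnSamePath p q →
    ¬ ∃ ρ : ℕ → ℕ, (∀ x, TypeIVar T x → ρ x = x) ∧ renameAtom ρ b = a

/-- Instantiation of a schema tree into a ground tree. -/
inductive Instantiates (τ : ℕ → GTerm) : ATree → GTree → Prop where
  | node (a : Atom) (ts : List ATree) (gts : List GTree) :
      ts.length = gts.length →
      (∀ (i : ℕ) (t : ATree) (g : GTree), ts[i]? = some t → gts[i]? = some g → Instantiates τ t g) →
      Instantiates τ (.node a ts) (.node (applyAtom τ a) gts)

/-- `HeightLE T n`: every root-to-leaf path of `T` has at most `n` atoms. -/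
inductive HeightLE : ATree → ℕ → Prop where
  | node (a : Atom) (ts : List ATree) (n : ℕ) :
      (∀ t ∈ ts, HeightLE t n) → HeightLE (.node a ts) (n + 1)

/-- The auxiliary query rule whose head collects the answers to `Q`. -/
def queryRule (Q : CQuery) (n : ℕ) : TGD := ⟨Q.body, ⟨n, Q.free.map Term.var⟩⟩

/-- `T` is a proof-tree schema for the answer `t` to the query `Q` (represented
via the auxiliary query predicate `n`) over the program `P ∪ D`. -/
def ProofSchemaFor (P : Set TGD) (D : Set GAtom) (Q : CQuery) (n : ℕ) (t : List GTerm)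
    (T : ATree) : Prop :=
  IsSchemaTree (insert (queryRule Q n) P) T ∧ SuccinctSchema T ∧
  T.root.pred = n ∧
  ∃ τ G, Instantiates τ T G ∧ IsProofTree (insert (queryRule Q n) P) D G ∧
    G.root = ⟨n, t⟩

/-! # The query-driven chase qchase and the algorithm SChQA -/

/-- Freezing a ground term: nulls become (fresh) frozen constants. -/
def freezeT : GTerm → GTerm
  | .null n => .fconst n
  | t => t

/-- Freezing every null of an instance. -/
def freezeI (I : Inst) : Inst := (fun a => GAtom.mk a.pred (a.args.map freezeT)) '' I

/-- `A` is `Π`-homomorphic to `B` (for a set of positions `Sel`): a homomorphism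
(identity on constants and frozen constants) maps `A` to `B` and is the
identity on the terms of `A` in positions of `Sel`. -/
def PiHom (Sel : Set Pos) (A B : GAtom) : Prop :=
  ∃ h : GTerm → GTerm,
    (∀ t : GTerm, t.isConst → h t = t) ∧
    A.pred = B.pred ∧ A.args.map h = B.args ∧
    (∀ (i : ℕ) (t : GTerm), (A.pred, i) ∈ Sel → A.args[i]? = some t → h t = t)

/-- One step of the query-driven chase: a rule-assignment pair that is
`Sel`-applicable over `I` is enforced. -/
def QChaseStep (Sel : Set Pos) (P : Set TGD) (I J : Inst) : Prop :=
  ∃ σ θ θ', σ ∈ P ∧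
    (∀ a ∈ σ.body, applyAtom θ a ∈ I) ∧
    (∀ v, varInBody σ v → θ' v = θ v) ∧
    (∀ z, isExistVar σ z → ∃ n, θ' z = GTerm.null n ∧ n ∉ nullsOf I) ∧
    (∀ z z', isExistVar σ z → isExistVar σ z' → θ' z = θ' z' → z = z') ∧
    (∀ B ∈ I, ¬ PiHom Sel (applyAtom θ' σ.head) B) ∧
    J = insert (applyAtom θ' σ.head) I

/-- `J` is a saturation of `I`: obtained from `I` by `Sel`-applicable steps,
with no `Sel`-applicable pair left. -/
def Saturation (Sel : Set Pos) (P : Set TGD) (I J : Inst) : Prop :=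
  Relation.ReflTransGen (QChaseStep Sel P) I J ∧ ∀ K, ¬ QChaseStep Sel P J K

/-- Result of the query-driven chase with `m` resumptions (Step 2 freezes all
nulls and returns to Step 1). -/
def QChaseRes (Sel : Set Pos) (P : Set TGD) (D : Inst) : ℕ → Inst → Prop
  | 0 => fun J => Saturation Sel P D J
  | (m + 1) => fun K => ∃ J, QChaseRes Sel P D m J ∧ Saturation Sel P (freezeI J) K

/-- There is no infinite `R`-chain starting at `a`. -/
def NoInfiniteChain {α : Type*} (R : α → α → Prop) (a : α) : Prop :=
  ¬ ∃ f : ℕ → α, f 0 = a ∧ ∀ n, R (f n) (f (n + 1))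

/-- Surrogate for "conjunctive query answering for the fixed rules `P` and query `Q`
can be done in polynomial time in the size of the EDB, over EDBs satisfying `Cond`". -/
def CQAInPolyTime (P : Set TGD) (Q : CQuery) (Cond : Finset GAtom → Prop) : Prop :=
  ∃ (f : Finset GAtom → List GTerm → Bool) (time : Finset GAtom → List GTerm → ℕ) (c k : ℕ),
    (∀ (D : Finset GAtom) (t : List GTerm), IsEDB D → Cond D →
      (f D t = true ↔ t ∈ certAns P ↑D Q)) ∧
    ∀ (D : Finset GAtom) (t : List GTerm), time D t ≤ c * edbSize D ^ k + c

/-! # Magic-sets rewriting MagicD+ -/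

/-- An adornment: a list of Booleans (`true` = bound, `false` = free). -/
abbrev Adn := List Bool

/-- The adorned version of predicate `q` with adornment `α`
(predicates of the input program are assumed to be ≡ 0 mod 3). -/
def adPred (q : ℕ) (α : Adn) : ℕ := 3 * Nat.pair q (Encodable.encode α) + 1

/-- The magic predicate for predicate `q` with adornment `α`. -/
def mgPred (q : ℕ) (α : Adn) : ℕ := 3 * Nat.pair q (Encodable.encode α) + 2

/-- The adorned version of an atom. -/
def adornAtom (a : Atom) (α : Adn) : Atom := ⟨adPred a.pred α, a.args⟩

/-- The terms of an atom in the bound positions of an adornment. -/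
def boundArgs (a : Atom) (α : Adn) : List Term :=
  ((a.args.zip α).filter (fun x => x.2)).map Prod.fst

/-- The magic atom of an atom w.r.t. an adornment. -/
def magicAtom (a : Atom) (α : Adn) : Atom := ⟨mgPred a.pred α, boundArgs a α⟩

/-- Intentional predicates: those occurring in some rule head. -/
def intentional (P : Set TGD) (q : ℕ) : Prop := ∃ σ ∈ P, σ.head.pred = q

/-- An abstract side-way information passing strategy (sips) family: for every rule
and head adornment, a strict partial order on the body-atom indices together with
the sets of variables that are bound after processing each body atom. -/
structure SipsFam where
  ord : TGD → Adn → ℕ → ℕ → Prop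
  fb : TGD → Adn → ℕ → Finset ℕ
  irrefl : ∀ σ α i, ¬ ord σ α i i
  trans : ∀ σ α i j l, ord σ α i j → ord σ α j l → ord σ α i l
  fbSub : ∀ σ α i, ∀ x ∈ fb σ α i, ∃ a, σ.body[i]? = some a ∧ varInAtom x a

/-- The head variables bound by an adornment. -/
def hdBound (σ : TGD) (α : Adn) : Set ℕ :=
  { x | ∃ i : ℕ, α[i]? = some true ∧ σ.head.args[i]? = some (Term.var x) }

/-- The variables that are bound and available when processing body atom `i`. -/
def availVars (S : SipsFam) (σ : TGD) (α : Adn) (i : ℕ) : Set ℕ :=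
  hdBound σ α ∪ { x | ∃ j, S.ord σ α j i ∧ x ∈ S.fb σ α j }

def termBound (V : Set ℕ) : Term → Prop
  | .const _ => True
  | .var x => x ∈ V

/-- `β` is the adornment of the `i`-th body atom of `σ` induced by the sips. -/
def IsBodyAdn (S : SipsFam) (σ : TGD) (α : Adn) (i : ℕ) (β : Adn) : Prop :=
  ∃ a, σ.body[i]? = some a ∧ β.length = a.args.length ∧
    ∀ (j : ℕ) (t : Term), a.args[j]? = some t →
      (β[j]? = some true ↔ termBound (availVars S σ α i) t)

/-- A head adornment is admissible for `σ` when it binds no position holding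
an existential variable. -/
def AdnOK (σ : TGD) (α : Adn) : Prop :=
  ∀ (i : ℕ) (z : ℕ), α[i]? = some true → σ.head.args[i]? = some (Term.var z) →
    ¬ isExistVar σ z

/-- The transformed body of a rule: intentional atoms are adorned according to
the sips, extensional atoms are kept unchanged. -/
def BodyTrans (P : Set TGD) (S : SipsFam) (σ : TGD) (α : Adn) (b : List Atom) : Prop :=
  b.length = σ.body.length ∧
  ∀ (i : ℕ) (a : Atom), σ.body[i]? = some a →
    (intentional P a.pred → ∃ β, IsBodyAdn S σ α i β ∧ b[i]? = some (adornAtom a β)) ∧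
    (¬ intentional P a.pred → b[i]? = some a)

/-- The adornment of the query atom: positions holding constants are bound. -/
def queryAdn (Qa : Atom) : Adn :=
  Qa.args.map (fun t => match t with | Term.const _ => true | Term.var _ => false)

/-- The adorned predicates (pairs of predicate and adornment) generated by
MagicD+, starting from the query and propagating through the rules. -/
inductive AdGen (P : Set TGD) (S : SipsFam) (Qa : Atom) : ℕ → Adn → Prop where
  | query : AdGen P S Qa Qa.pred (queryAdn Qa)
  | step (q : ℕ) (α : Adn) (σ : TGD) (i : ℕ) (a : Atom) (β : Adn) :
      AdGen P S Qa q α → σ ∈ P → σ.head.pred = q → AdnOK σ α →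
      σ.body[i]? = some a → intentional P a.pred → IsBodyAdn S σ α i β →
      AdGen P S Qa a.pred β

/-- A list of fresh variables `x₀,…,x_{n-1}`. -/
def varsList (n : ℕ) : List Term := (List.range n).map Term.var

/-- The result `P_m` of the MagicD+ rewriting of the rules `P` w.r.t. the
(atomic) query `Qa` and the sips family `S`: adorned rules guarded by magic
atoms, magic rules, the seed, and the rules loading extensional data. -/
def MagicProg (P : Set TGD) (S : SipsFam) (Qa : Atom) : Set TGD :=
  -- (Steps 1 and 2) adorned rules with the magic atom of the head added to the body
  { ρ | ∃ (q : ℕ) (α : Adn) (σ : TGD) (b : List Atom),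
        AdGen P S Qa q α ∧ σ ∈ P ∧ σ.head.pred = q ∧ AdnOK σ α ∧
        BodyTrans P S σ α b ∧
        ρ = ⟨magicAtom σ.head α :: b, adornAtom σ.head α⟩ } ∪
  -- (Step 3) magic rules: for each adorned body atom, its magic predicate is
  -- defined from the head's magic atom and the sips-preceding transformed atoms
  { ρ | ∃ (q : ℕ) (α : Adn) (σ : TGD) (b : List Atom) (i : ℕ) (a : Atom) (β : Adn)
          (js : List ℕ),
        AdGen P S Qa q α ∧ σ ∈ P ∧ σ.head.pred = q ∧ AdnOK σ α ∧
        BodyTrans P S σ α b ∧ σ.body[i]? = some a ∧ intentional P a.pred ∧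
        IsBodyAdn S σ α i β ∧
        js.Pairwise (· < ·) ∧ (∀ j : ℕ, j ∈ js ↔ (j < σ.body.length ∧ S.ord σ α j i)) ∧
        ρ = ⟨magicAtom σ.head α :: js.filterMap (fun j => b[j]?), magicAtom a β⟩ } ∪
  -- (Step 3) the seed, as a bodyless rule
  { ρ | ρ = ⟨[], magicAtom Qa (queryAdn Qa)⟩ } ∪
  -- (Step 4) rules loading the extensional data of adorned intentional predicates
  { ρ | ∃ (q : ℕ) (α : Adn),
        AdGen P S Qa q α ∧ intentional P q ∧
        ρ = ⟨[magicAtom ⟨q, varsList α.length⟩ α, ⟨q, varsList α.length⟩],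
             adornAtom ⟨q, varsList α.length⟩ α⟩ }

/-! # Entailment under tgds and negative constraints -/

/-- A negative constraint is represented by its body (a list of atoms);
an instance satisfies it when the existential closure of the body is false. -/
abbrev NegConstraint := List Atom

/-- `P ∪ D ⊨ Q` for a set of tgds `P` and a Boolean conjunctive query `q`. -/
def entailsT (P : Set TGD) (D : Set GAtom) (q : List Atom) : Prop :=
  ∀ I : Inst, isModel P D I → bcqTrue q I

/-- `P ∪ C ∪ D ⊨ Q` for tgds `P` and negative constraints `C`. -/
def entailsTC (P : Set TGD) (C : Set NegConstraint) (D : Set GAtom) (q : List Atom) : Prop :=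
  ∀ I : Inst, isModel P D I → (∀ η ∈ C, ¬ bcqTrue η I) → bcqTrue q I

/-!
Every model of a set of tgds over a null-free database receives a constant-preserving
homomorphism from the Skolem chase, built stage by stage: the nulls invented at stage `n + 1`
are named after `n` and their trigger, so a homomorphism on the first `n` stages extends by
sending the nulls of a trigger to the existential witnesses the model provides for the image
of that trigger. Hence the tgds entail a Boolean conjunctive query exactly when it holds in the
Skolem chase. If none of the queries `Q_η` holds there, the Skolem chase also satisfies the
negative constraints, so `Q` holds in it and is entailed by the tgds alone.
-/

instance : Encodable GTerm :=
  Encodable.ofEquiv (ℕ ⊕ ℕ ⊕ ℕ)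
    { toFun := fun | .const n => .inl n | .fconst n => .inr (.inl n) | .null n => .inr (.inr n)
      invFun := fun | .inl n => .const n | .inr (.inl n) => .fconst n | .inr (.inr n) => .null n
      left_inv := fun t => by cases t <;> rfl
      right_inv := fun s => by rcases s with n | n | n <;> rfl }

instance : Encodable Term :=
  Encodable.ofEquiv (ℕ ⊕ ℕ)
    { toFun := fun | .var n => .inl n | .const n => .inr n
      invFun := fun | .inl n => .var n | .inr n => .const n
      left_inv := fun t => by cases t <;> rfl
      right_inv := fun s => by rcases s with n | n <;> rfl }

instance : Encodable Atom :=
  Encodable.ofEquiv (ℕ × List Term) ⟨fun a => (a.pred, a.args), fun p => ⟨p.1, p.2⟩,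
    fun _ => rfl, fun _ => rfl⟩

instance : Encodable GAtom :=
  Encodable.ofEquiv (ℕ × List GTerm) ⟨fun a => (a.pred, a.args), fun p => ⟨p.1, p.2⟩,
    fun _ => rfl, fun _ => rfl⟩

instance : Encodable TGD :=
  Encodable.ofEquiv (List Atom × Atom) ⟨fun σ => (σ.body, σ.head), fun p => ⟨p.1, p.2⟩,
    fun _ => rfl, fun _ => rfl⟩

def GAtom.map (h : GTerm → GTerm) (A : GAtom) : GAtom := ⟨A.pred, A.args.map h⟩

lemma GAtom.map_applyAtom {h : GTerm → GTerm} (hc : ∀ c, h (.const c) = .const c)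
    (θ : ℕ → GTerm) (a : Atom) : (applyAtom θ a).map h = applyAtom (h ∘ θ) a := by
  simp only [GAtom.map, applyAtom, List.map_map, GAtom.mk.injEq, true_and]
  refine List.map_congr_left fun t _ => ?_
  cases t with
  | var v => rfl
  | const c => exact hc c

lemma applyAtom_congr {θ₁ θ₂ : ℕ → GTerm} {a : Atom}
    (h : ∀ v, varInAtom v a → θ₁ v = θ₂ v) : applyAtom θ₁ a = applyAtom θ₂ a := by
  simp only [applyAtom, GAtom.mk.injEq, true_and]
  refine List.map_congr_left fun t ht => ?_
  cases t with
  | var v => exact h v ht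
  | const c => rfl

lemma mem_args_applyAtom {θ : ℕ → GTerm} {a : Atom} {v : ℕ} (hv : varInAtom v a) :
    θ v ∈ (applyAtom θ a).args :=
  List.mem_map_of_mem (f := applyTerm θ) hv

def bodyImage (σ : TGD) (θ : ℕ → GTerm) : List GAtom := σ.body.map (applyAtom θ)

lemma eq_of_bodyImage_eq {σ : TGD} {θ₁ θ₂ : ℕ → GTerm} (h : bodyImage σ θ₁ = bodyImage σ θ₂)
    {v : ℕ} (hv : varInBody σ v) : θ₁ v = θ₂ v := by
  obtain ⟨a, ha, hva⟩ := hv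
  have hargs := congrArg GAtom.args (List.map_inj_left.mp h a ha)
  exact List.map_inj_left.mp hargs (Term.var v) hva

def skolemNull (n : ℕ) (σ : TGD) (B : List GAtom) (z : ℕ) : ℕ :=
  Nat.pair n (Encodable.encode (σ, B, z))

open Classical in
noncomputable def skolemAsg (n : ℕ) (σ : TGD) (θ : ℕ → GTerm) : ℕ → GTerm :=
  fun v => if varInBody σ v then θ v else .null (skolemNull n σ (bodyImage σ θ) v)

def skolemStage (P : Set TGD) (D : Set GAtom) : ℕ → Inst
  | 0 => D
  | n + 1 => skolemStage P D n ∪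
      { A | ∃ σ ∈ P, ∃ θ, (∀ a ∈ σ.body, applyAtom θ a ∈ skolemStage P D n) ∧
          A = applyAtom (skolemAsg n σ θ) σ.head }

def skolemChase (P : Set TGD) (D : Set GAtom) : Inst := ⋃ n, skolemStage P D n

section SkolemChase

variable {P : Set TGD} {D : Set GAtom}

lemma skolemStage_mono : Monotone (skolemStage P D) :=
  monotone_nat_of_le_succ fun _ => Set.subset_union_left

lemma exists_skolemStage_of_forall_mem_skolemChase {θ : ℕ → GTerm} {l : List Atom}
    (hl : ∀ a ∈ l, applyAtom θ a ∈ skolemChase P D) :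
    ∃ n, ∀ a ∈ l, applyAtom θ a ∈ skolemStage P D n := by
  classical
  obtain ⟨n, hn⟩ := skolemStage_mono.directed_le.exists_mem_subset_of_finset_subset_biUnion
    (s := (l.map (applyAtom θ)).toFinset) (by simpa [Set.subset_def, skolemChase] using hl)
  exact ⟨n, fun a ha => hn (by simpa using ⟨a, ha, rfl⟩)⟩

lemma skolemChase_isModel : isModel P D (skolemChase P D) := by
  refine ⟨Set.subset_iUnion (skolemStage P D) 0, fun σ hσ θ hbody => ?_⟩
  obtain ⟨n, hn⟩ := exists_skolemStage_of_forall_mem_skolemChase hbody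
  refine ⟨skolemAsg n σ θ, fun v hv => if_pos hv, ?_⟩
  exact Set.mem_iUnion.mpr ⟨n + 1, Or.inr ⟨σ, hσ, θ, hn, rfl⟩⟩

lemma unpair_fst_lt_of_mem_nullsOf_skolemStage (hD : nullsOf D = ∅) :
    ∀ n, ∀ k ∈ nullsOf (skolemStage P D n), (Nat.unpair k).1 < n
  | 0, k, hk => by simp [skolemStage, hD] at hk
  | n + 1, k, ⟨A, hA, hkA⟩ => by
    rcases hA with hA | ⟨σ, -, θ, hbody, rfl⟩
    · exact (unpair_fst_lt_of_mem_nullsOf_skolemStage hD n k ⟨A, hA, hkA⟩).trans n.lt_succ_self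
    obtain ⟨t, ht, htk⟩ := List.mem_map.mp hkA
    cases t with
    | const c => cases htk
    | var v =>
      by_cases hv : varInBody σ v
      · have hθv : θ v = .null k := by simpa [applyTerm, skolemAsg, hv] using htk
        obtain ⟨a, ha, hva⟩ := hv
        have hk : k ∈ nullsOf (skolemStage P D n) :=
          ⟨_, hbody a ha, hθv ▸ mem_args_applyAtom (θ := θ) hva⟩
        exact (unpair_fst_lt_of_mem_nullsOf_skolemStage hD n k hk).trans n.lt_succ_self
      · have hk : skolemNull n σ (bodyImage σ θ) v = k := by
          simpa [applyTerm, skolemAsg, hv] using htk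
        simp [← hk, skolemNull]

noncomputable def extendAtStage (n : ℕ) (h : GTerm → GTerm) (W : TGD → List GAtom → ℕ → GTerm) :
    GTerm → GTerm
  | .null k =>
    if (Nat.unpair k).1 = n then
      match (Encodable.decode (Nat.unpair k).2 : Option (TGD × List GAtom × ℕ)) with
      | some (σ, B, z) => W σ B z
      | none => h (.null k)
    else h (.null k)
  | t => h t

lemma extendAtStage_skolemNull (n : ℕ) (h : GTerm → GTerm) (W : TGD → List GAtom → ℕ → GTerm)
    (σ : TGD) (B : List GAtom) (z : ℕ) :
    extendAtStage n h W (.null (skolemNull n σ B z)) = W σ B z := by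
  simp [extendAtStage, skolemNull]

lemma extendAtStage_eq_of_mem_skolemStage (hD : nullsOf D = ∅) {n : ℕ} (h : GTerm → GTerm)
    (W : TGD → List GAtom → ℕ → GTerm) {A : GAtom} (hA : A ∈ skolemStage P D n) {t : GTerm}
    (ht : t ∈ A.args) : extendAtStage n h W t = h t := by
  cases t with
  | null k =>
    have hk := unpair_fst_lt_of_mem_nullsOf_skolemStage hD n k ⟨A, hA, ht⟩
    simp [extendAtStage, hk.ne]
  | _ => rfl

lemma map_applyAtom_skolemAsg {n : ℕ} {h : GTerm → GTerm} (hc : ∀ c, h (.const c) = .const c)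
    {W : TGD → List GAtom → ℕ → GTerm} {σ : TGD} {θ : ℕ → GTerm}
    (hθ : ∀ v, varInBody σ v → extendAtStage n h W (θ v) = W σ (bodyImage σ θ) v) (a : Atom) :
    (applyAtom (skolemAsg n σ θ) a).map (extendAtStage n h W) =
      applyAtom (W σ (bodyImage σ θ)) a := by
  rw [GAtom.map_applyAtom (h := extendAtStage n h W) hc]
  refine applyAtom_congr fun v _ => ?_
  by_cases hv : varInBody σ v
  · simp [skolemAsg, hv, hθ v hv]
  · simp [skolemAsg, hv, extendAtStage_skolemNull]

lemma exists_skolem_witness {I : Inst} (hI : ∀ σ ∈ P, satTGD I σ) (h : GTerm → GTerm) :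
    ∃ W : TGD → List GAtom → ℕ → GTerm, ∀ σ ∈ P, ∀ θ : ℕ → GTerm,
      (∀ a ∈ σ.body, applyAtom (h ∘ θ) a ∈ I) →
        (∀ v, varInBody σ v → W σ (bodyImage σ θ) v = h (θ v)) ∧
          applyAtom (W σ (bodyImage σ θ)) σ.head ∈ I := by
  have hW₀ : ∀ σ B, ∃ W₀ : ℕ → GTerm, ∀ θ : ℕ → GTerm, σ ∈ P → bodyImage σ θ = B →
      (∀ a ∈ σ.body, applyAtom (h ∘ θ) a ∈ I) →
        (∀ v, varInBody σ v → W₀ v = h (θ v)) ∧ applyAtom W₀ σ.head ∈ I := by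
    intro σ B
    by_cases hB : ∃ θ, σ ∈ P ∧ bodyImage σ θ = B ∧ ∀ a ∈ σ.body, applyAtom (h ∘ θ) a ∈ I
    · obtain ⟨θ₀, hσ, rfl, hθ₀⟩ := hB
      obtain ⟨W₀, hW₀θ₀, hhead⟩ := hI σ hσ (h ∘ θ₀) hθ₀
      refine ⟨W₀, fun θ _ hθ _ => ⟨fun v hv => ?_, hhead⟩⟩
      rw [hW₀θ₀ v hv, Function.comp_apply, eq_of_bodyImage_eq hθ hv]
    · exact ⟨fun _ => .const 0, fun θ hσ hθ hbody => (hB ⟨θ, hσ, hθ, hbody⟩).elim⟩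
  choose W hW using hW₀
  exact ⟨W, fun σ hσ θ hbody => hW σ _ θ hσ rfl hbody⟩

lemma exists_hom_skolemStage (hD : nullsOf D = ∅) {I : Inst} (hI : isModel P D I) (n : ℕ) :
    ∃ h : GTerm → GTerm, (∀ c, h (.const c) = .const c) ∧
      ∀ A ∈ skolemStage P D n, A.map h ∈ I := by
  induction n with
  | zero => exact ⟨id, fun _ => rfl, fun A hA => by simpa [GAtom.map] using hI.1 hA⟩
  | succ n ih =>
    obtain ⟨h, hc, hh⟩ := ih
    obtain ⟨W, hW⟩ := exists_skolem_witness hI.2 h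
    have hold : ∀ A ∈ skolemStage P D n, A.map (extendAtStage n h W) = A.map h := fun A hA => by
      simp only [GAtom.map, GAtom.mk.injEq, true_and]
      exact List.map_congr_left fun t ht => extendAtStage_eq_of_mem_skolemStage hD h W hA ht
    refine ⟨extendAtStage n h W, hc, ?_⟩
    rintro A (hA | ⟨σ, hσ, θ, hbody, rfl⟩)
    · exact hold A hA ▸ hh A hA
    · have hbodyI : ∀ a ∈ σ.body, applyAtom (h ∘ θ) a ∈ I := fun a ha =>
        GAtom.map_applyAtom hc θ a ▸ hh _ (hbody a ha)
      obtain ⟨hWθ, hhead⟩ := hW σ hσ θ hbodyI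
      have hθ : ∀ v, varInBody σ v → extendAtStage n h W (θ v) = W σ (bodyImage σ θ) v := by
        rintro v ⟨a, ha, hva⟩
        rw [extendAtStage_eq_of_mem_skolemStage hD h W (hbody a ha) (mem_args_applyAtom hva),
          hWθ v ⟨a, ha, hva⟩]
      exact map_applyAtom_skolemAsg hc hθ σ.head ▸ hhead

lemma bcqTrue_of_bcqTrue_skolemChase (hD : nullsOf D = ∅) {I : Inst} (hI : isModel P D I)
    {q : List Atom} (hq : bcqTrue q (skolemChase P D)) : bcqTrue q I := by
  obtain ⟨θ, hθ⟩ := hq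
  obtain ⟨n, hn⟩ := exists_skolemStage_of_forall_mem_skolemChase hθ
  obtain ⟨h, hc, hh⟩ := exists_hom_skolemStage hD hI n
  exact ⟨h ∘ θ, fun a ha => GAtom.map_applyAtom hc θ a ▸ hh _ (hn a ha)⟩

theorem entailsT_iff_bcqTrue_skolemChase (hD : nullsOf D = ∅) {q : List Atom} :
    entailsT P D q ↔ bcqTrue q (skolemChase P D) :=
  ⟨fun hq => hq _ skolemChase_isModel, fun hq _ hI => bcqTrue_of_bcqTrue_skolemChase hD hI hq⟩

end SkolemChase

lemma nullsOf_eq_empty_of_isEDB {D : Finset GAtom} (hD : IsEDB D) : nullsOf ↑D = ∅ :=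
  Set.eq_empty_of_forall_notMem fun _ ⟨A, hA, hk⟩ => by
    obtain ⟨c, hc⟩ := hD A hA _ hk
    cases hc

/-- Entailment under tgds plus negative constraints reduces to
entailment under the tgds alone, of the query or of the existential closure of
the body of some negative constraint. -/
theorem tgd_nc_entailment_iff
    (PR : Set TGD) (PC : Set NegConstraint) (D : Finset GAtom) (hD : IsEDB D)
    (Q : List Atom) :
    entailsTC PR PC ↑D Q ↔
      entailsT PR ↑D Q ∨ ∃ η ∈ PC, entailsT PR ↑D η := by
  have hchase : ∀ q, entailsT PR ↑D q ↔ bcqTrue q (skolemChase PR ↑D) := fun _ =>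
    entailsT_iff_bcqTrue_skolemChase (nullsOf_eq_empty_of_isEDB hD)
  constructor
  · intro hQ
    by_cases hη : ∃ η ∈ PC, bcqTrue η (skolemChase PR ↑D)
    · obtain ⟨η, hηC, hηU⟩ := hη
      exact Or.inr ⟨η, hηC, (hchase η).mpr hηU⟩
    · push Not at hη
      exact Or.inl ((hchase Q).mpr (hQ _ skolemChase_isModel hη))
  · rintro (hQ | ⟨η, hηC, hη⟩) I hI hC
    · exact hQ I hI
    · exact absurd (hη I hI) (hC η hηC)
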